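/- Suppose 0 < ε < 1/2, and set α = (1−2ε)/(1−ε) ∈ (0,1), C₄ = 2/(1−α), C₅ = (1+α)/2, n₀ = ⌈log_α((1−C₅)/(2C₄))⌉, γ = (3+α)/4, and η = C₄/(1−α) + C₅·n₀. Let c̄(b,i) = Σ_m μ(m,i)·b(m). For β ∈ (0,1), define the finite-horizon discounted value functions by the recursion V_{1,β}(b) = max_{i} c̄(b,i) and V_{j+1,β}(b) = max_{i} [ c̄(b,i) + β·Σ_{r∈{0,1}} p(r|b,i)·V_{j,β}(H(b,i,r)) ] for j ≥ 1 and b ∈ B, where the maximum is over i ∈ {1,…,I}. Then for every integer k ≥ 1, every β ∈ (0,1), and all b¹, b² ∈ B, | V_{k·n₀, β}(b¹) − V_{k·n₀, β}(b²) | ≤ [ η·(1 − (β^{n₀}γ)^k)/(1 − β^{n₀}γ) + (β^{n₀}γ)^k ]·‖b¹ − b²‖₁. -/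

import Mathlib

open Finset

/-- Membership in the belief simplex `B`. -/
def IsBelief {M : ℕ} (b : Fin M → ℝ) : Prop :=
  (∀ m, 0 ≤ b m) ∧ ∑ m, b m = 1

/-- ℓ¹ distance between two vectors. -/
noncomputable def l1 {M : ℕ} (b b' : Fin M → ℝ) : ℝ :=
  ∑ m, |b m - b' m|

/-- A row-stochastic matrix. -/
def RowStochastic {M : ℕ} (P : Fin M → Fin M → ℝ) : Prop :=
  (∀ m m', 0 ≤ P m m') ∧ ∀ m, ∑ m', P m m' = 1

/-- Bernoulli likelihood `p^r (1-p)^(1-r)` for `r ∈ {0,1}` (encoded as `Bool`). -/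
noncomputable def bern (p : ℝ) (r : Bool) : ℝ :=
  if r then p else 1 - p

/-- Bayesian belief update `H(b, i, r)`. -/
noncomputable def Hupd {M I : ℕ} (P : Fin M → Fin M → ℝ) (μ : Fin M → Fin I → ℝ)
    (b : Fin M → ℝ) (i : Fin I) (r : Bool) : Fin M → ℝ :=
  fun m => (∑ m', P m' m * (bern (μ m' i) r * b m')) /
    (∑ m'', bern (μ m'' i) r * b m'')

/-- Probability `p(r | b, i)` of observing reward `r` under belief `b` pulling arm `i`. -/
noncomputable def pObs {M I : ℕ} (μ : Fin M → Fin I → ℝ)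
    (b : Fin M → ℝ) (i : Fin I) (r : Bool) : ℝ :=
  ∑ m, bern (μ m i) r * b m

/-- `n`-step iterated Bayesian belief update `H^(n)(b, i_{1:n}, r_{1:n})`. -/
noncomputable def Hiter {M I : ℕ} (P : Fin M → Fin M → ℝ) (μ : Fin M → Fin I → ℝ) :
    (n : ℕ) → (Fin M → ℝ) → (Fin n → Fin I) → (Fin n → Bool) → (Fin M → ℝ)
  | 0, b, _, _ => b
  | n + 1, b, is, rs =>
      Hiter P μ n (Hupd P μ b (is 0) (rs 0)) (fun t => is t.succ) (fun t => rs t.succ)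

/-- Law `L(r_{1:n+1} | m, i_{1:n+1})` of a reward sequence of length `n+1`
given the initial hidden state `m`. -/
noncomputable def law {M I : ℕ} (P : Fin M → Fin M → ℝ) (μ : Fin M → Fin I → ℝ) :
    (n : ℕ) → Fin M → (Fin (n + 1) → Fin I) → (Fin (n + 1) → Bool) → ℝ
  | 0, m, is, rs => bern (μ m (is 0)) (rs 0)
  | n + 1, m, is, rs =>
      bern (μ m (is 0)) (rs 0) *
        ∑ m', P m m' * law P μ n m' (fun t => is t.succ) (fun t => rs t.succ)

/-- Law `Q^(n+1)(r_{1:n+1} | b, i_{1:n+1})` of a reward sequence of length `n+1`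
given the initial belief `b`. -/
noncomputable def Qlaw {M I : ℕ} (P : Fin M → Fin M → ℝ) (μ : Fin M → Fin I → ℝ)
    (n : ℕ) (b : Fin M → ℝ) (is : Fin (n + 1) → Fin I) (rs : Fin (n + 1) → Bool) : ℝ :=
  ∑ m, b m * law P μ n m is rs

/-- Finite-horizon discounted optimal value functions of the belief MDP:
`Vfin P μ β j` is `V_{j,β}`, with `V_{0,β} = 0`, so that
`V_{1,β}(b) = max_i c̄(b,i)` and
`V_{j+1,β}(b) = max_i [c̄(b,i) + β Σ_r p(r|b,i) V_{j,β}(H(b,i,r))]`. -/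
noncomputable def Vfin {M I : ℕ} (P : Fin M → Fin M → ℝ) (μ : Fin M → Fin I → ℝ)
    (β : ℝ) : ℕ → (Fin M → ℝ) → ℝ
  | 0, _ => 0
  | j + 1, b =>
      ⨆ i : Fin I, ((∑ m, μ m i * b m) +
        β * ∑ r : Bool, pObs μ b i r * Vfin P μ β j (Hupd P μ b i r))

/-!
Over a block of `n` steps, follow from both beliefs a policy that is optimal for `b₁`: the gap
`V_{j+n}(b₁) - V_{j+n}(b₂)` is at most the gap of the values of this policy, i.e. of the expected
rewards at times `t < n` and of the expected terminal value `V_j`. Each is a mean over reward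
paths of a function of the filter, and the two means differ because the filters drift apart and
because the path laws differ. Since every entry of `P` is at least `ε`, the smoothing kernels have
Dobrushin coefficient at most `α`, so the filters forget their initial beliefs at rate `α` per
step on average; the path laws are `‖b₁ - b₂‖₁`-close in total variation; and after one step all
filters have entries at least `ε`, which bounds the oscillation of `V_j` on them. Hence
`L_{j+n} ≤ ∑_{t<n} βᵗ (αᵗ + 1/2) + βⁿ L_j (2αⁿ + 1 - Mε)`, and for `n = n₀` this is at most
`η + β^{n₀} γ L_j`; iterating from `L_0 = 1` gives the bound.
-/

theorem sum_fin_succ_pi {β γ : Type*} [Fintype β] [AddCommMonoid γ] {n : ℕ}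
    (g : (Fin (n + 1) → β) → γ) :
    ∑ rs, g rs = ∑ r, ∑ rs : Fin n → β, g (Fin.cons r rs) := by
  rw [← (Fin.consEquiv fun _ => β).sum_comp, Fintype.sum_prod_type]
  rfl

theorem abs_sum_mul_le_of_sum_eq_zero {ι : Type*} [Fintype ι] {d f : ι → ℝ}
    (hd : ∑ x, d x = 0) {c ω : ℝ} (hf : ∀ x, |f x - c| ≤ ω) :
    |∑ x, f x * d x| ≤ ω * ∑ x, |d x| := by
  have hcentre : ∑ x, f x * d x = ∑ x, (f x - c) * d x := by
    simp only [sub_mul, sum_sub_distrib, ← mul_sum, hd, mul_zero, sub_zero]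
  rw [hcentre, mul_sum]
  refine (abs_sum_le_sum_abs _ _).trans (sum_le_sum fun x _ => ?_)
  rw [abs_mul]
  exact mul_le_mul_of_nonneg_right (hf x) (abs_nonneg _)

theorem exists_abs_sub_le_half {ι : Type*} [Finite ι] [Nonempty ι] {v : ι → ℝ} {D : ℝ}
    (hv : ∀ x y, v x - v y ≤ D) : ∃ c, ∀ x, |v x - c| ≤ D / 2 := by
  obtain ⟨xM, hxM⟩ := Finite.exists_max v
  obtain ⟨xm, hxm⟩ := Finite.exists_min v
  refine ⟨(v xM + v xm) / 2, fun x => abs_le.2 ⟨?_, ?_⟩⟩ <;> linarith [hxM x, hxm x, hv xM xm]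

/-- Dobrushin's contraction estimate. -/
theorem sum_abs_sum_mul_le_of_minorization {ι : Type*} [Fintype ι] {K : ι → ι → ℝ}
    {ν : ι → ℝ} {c : ℝ} (hν : ∑ y, ν y = 1) (hK : ∀ x y, c * ν y ≤ K x y)
    (hKrow : ∀ x, ∑ y, K x y = 1) {d : ι → ℝ} (hd : ∑ x, d x = 0) :
    ∑ y, |∑ x, d x * K x y| ≤ (1 - c) * ∑ x, |d x| := by
  have hshift : ∀ y, ∑ x, d x * K x y = ∑ x, d x * (K x y - c * ν y) := fun y => by
    simp only [mul_sub, sum_sub_distrib, ← sum_mul, hd, zero_mul, sub_zero]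
  calc ∑ y, |∑ x, d x * K x y|
      ≤ ∑ y, ∑ x, |d x| * (K x y - c * ν y) := by
        refine sum_le_sum fun y _ => ?_
        rw [hshift]
        refine (abs_sum_le_sum_abs _ _).trans (sum_le_sum fun x _ => ?_)
        rw [abs_mul, abs_of_nonneg (sub_nonneg.2 (hK x y))]
    _ = (1 - c) * ∑ x, |d x| := by
        rw [sum_comm, mul_sum]
        refine sum_congr rfl fun x _ => ?_
        rw [← mul_sum, sum_sub_distrib, hKrow, ← mul_sum, hν, mul_one, mul_comm]

variable {M I : ℕ}

theorem bern_pos {p : ℝ} (hp : p ∈ Set.Ioo 0 1) (r : Bool) : 0 < bern p r := by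
  cases r <;> simp [bern, hp.1, hp.2]

theorem sum_bern (p : ℝ) : ∑ r, bern p r = 1 := by
  simp [bern]

theorem l1_comm (b b' : Fin M → ℝ) : l1 b b' = l1 b' b := by
  simp only [l1, abs_sub_comm]

theorem l1_nonneg (b b' : Fin M → ℝ) : 0 ≤ l1 b b' :=
  sum_nonneg fun _ _ => abs_nonneg _

theorem l1_le_of_forall_le {ε : ℝ} {b₁ b₂ : Fin M → ℝ} (hb₁ : IsBelief b₁) (hb₂ : IsBelief b₂)
    (h₁ : ∀ m, ε ≤ b₁ m) (h₂ : ∀ m, ε ≤ b₂ m) : l1 b₁ b₂ ≤ 2 * (1 - M * ε) :=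
  calc l1 b₁ b₂ ≤ ∑ m, ((b₁ m - ε) + (b₂ m - ε)) :=
        sum_le_sum fun m _ => abs_sub_le_iff.2 ⟨by linarith [h₂ m], by linarith [h₁ m]⟩
    _ = 2 * (1 - M * ε) := by
        simp only [sum_add_distrib, sum_sub_distrib, hb₁.2, hb₂.2, sum_const, card_univ,
          Fintype.card_fin, nsmul_eq_mul]
        ring

namespace IsBelief

variable {b b₁ b₂ : Fin M → ℝ}

theorem sum_mul_pos (hb : IsBelief b) {g : Fin M → ℝ} (hg : ∀ m, 0 < g m) :
    0 < ∑ m, g m * b m := by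
  obtain ⟨m, hm⟩ : ∃ m, 0 < b m := by
    by_contra! h
    linarith [sum_nonpos fun m (_ : m ∈ univ) => h m, hb.2]
  exact sum_pos' (fun m _ => mul_nonneg (hg m).le (hb.1 m)) ⟨m, mem_univ m, mul_pos (hg m) hm⟩

theorem sum_sub_eq_zero (hb₁ : IsBelief b₁) (hb₂ : IsBelief b₂) : ∑ m, (b₁ m - b₂ m) = 0 := by
  rw [sum_sub_distrib, hb₁.2, hb₂.2, sub_self]

end IsBelief

noncomputable def bayes (b g : Fin M → ℝ) : Fin M → ℝ :=
  fun m => g m * b m / ∑ m', g m' * b m'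

section Bayes

variable {b b₁ b₂ g : Fin M → ℝ}

theorem IsBelief.bayes (hb : IsBelief b) (hg : ∀ m, 0 < g m) : IsBelief (bayes b g) := by
  have hS := hb.sum_mul_pos hg
  refine ⟨fun m => div_nonneg (mul_nonneg (hg m).le (hb.1 m)) hS.le, ?_⟩
  simp only [_root_.bayes, ← sum_div, div_self hS.ne']

theorem bayes_one (hb : IsBelief b) : bayes b (fun _ => 1) = b := by
  ext m
  simp [bayes, hb.2]

theorem bayes_bayes (hb : IsBelief b) (hg : ∀ m, 0 < g m) (h : Fin M → ℝ) :
    bayes (bayes b g) h = bayes b (fun m => g m * h m) := by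
  have hS := (hb.sum_mul_pos hg).ne'
  ext m
  simp only [bayes, ← mul_div_assoc, ← sum_div, div_div_div_cancel_right₀ hS, mul_left_comm,
    mul_assoc]

theorem bayes_sum_mul {K : Fin M → Fin M → ℝ} (c : Fin M → ℝ)
    (hK : ∀ m, ∑ m', K m m' * g m' ≠ 0) (m' : Fin M) :
    bayes (fun m' => ∑ m, c m * K m m') g m' =
      ∑ m, bayes c (fun m => ∑ m', K m m' * g m') m * (K m m' * g m' / ∑ m'', K m m'' * g m'') := by
  have hden : ∑ m'', g m'' * ∑ m, c m * K m m'' = ∑ m, (∑ m'', K m m'' * g m'') * c m := by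
    simp only [mul_sum, sum_mul]
    rw [sum_comm]
    exact sum_congr rfl fun _ _ => sum_congr rfl fun _ _ => by ring
  simp only [bayes]
  rw [hden]
  simp only [mul_sum, sum_div]
  refine sum_congr rfl fun m _ => ?_
  field_simp [hK m]

theorem mul_l1_bayes_le (hb₁ : IsBelief b₁) (hb₂ : IsBelief b₂) (hg : ∀ m, 0 < g m) :
    (∑ m, g m * b₁ m) * l1 (bayes b₁ g) (bayes b₂ g) ≤ 2 * ∑ m, g m * |b₁ m - b₂ m| := by
  set X := ∑ m, g m * b₁ m
  set Y := ∑ m, g m * b₂ m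
  have hX : 0 < X := hb₁.sum_mul_pos hg
  have hY : 0 < Y := hb₂.sum_mul_pos hg
  have hsplit : ∀ m, X * (bayes b₁ g m - bayes b₂ g m)
      = g m * (b₁ m - b₂ m) - bayes b₂ g m * (X - Y) := fun m => by
    rw [show bayes b₁ g m = g m * b₁ m / X from rfl, show bayes b₂ g m = g m * b₂ m / Y from rfl]
    field_simp
    ring
  have hXY : |X - Y| ≤ ∑ m, g m * |b₁ m - b₂ m| := by
    simp only [X, Y, ← sum_sub_distrib, ← mul_sub]
    refine (abs_sum_le_sum_abs _ _).trans (le_of_eq (sum_congr rfl fun m _ => ?_))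
    rw [abs_mul, abs_of_pos (hg m)]
  calc X * l1 (bayes b₁ g) (bayes b₂ g) = ∑ m, |X * (bayes b₁ g m - bayes b₂ g m)| := by
        simp only [l1, mul_sum, abs_mul, abs_of_pos hX]
    _ ≤ ∑ m, (g m * |b₁ m - b₂ m| + bayes b₂ g m * |X - Y|) := by
        refine sum_le_sum fun m _ => ?_
        rw [hsplit]
        refine (abs_sub _ _).trans (le_of_eq ?_)
        rw [abs_mul, abs_mul, abs_of_pos (hg m), abs_of_nonneg ((hb₂.bayes hg).1 m)]
    _ ≤ 2 * ∑ m, g m * |b₁ m - b₂ m| := by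
        rw [sum_add_distrib, ← sum_mul, (hb₂.bayes hg).2, one_mul]
        linarith

end Bayes

section BeliefUpdate

variable {P : Fin M → Fin M → ℝ} {μ : Fin M → Fin I → ℝ} {ε : ℝ} {b b₁ b₂ : Fin M → ℝ}

theorem RowStochastic.le_one_sub (hM : 2 ≤ M) (hP : RowStochastic P)
    (hPε : ∀ m m', ε ≤ P m m') (m m' : Fin M) : P m m' ≤ 1 - ε := by
  have : Nontrivial (Fin M) := Fin.nontrivial_iff_two_le.2 hM
  obtain ⟨m₀, hm₀⟩ := exists_ne m'
  have hpair := sum_le_sum_of_subset_of_nonneg (subset_univ {m', m₀})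
    fun m'' _ _ => hP.1 m m''
  rw [sum_pair hm₀.symm, hP.2 m] at hpair
  linarith [hPε m m₀]

theorem RowStochastic.two_mul_le_one (hM : 2 ≤ M) (hP : RowStochastic P)
    (hPε : ∀ m m', ε ≤ P m m') : 2 * ε ≤ 1 := by
  have m : Fin M := ⟨0, by omega⟩
  linarith [hPε m m, hP.le_one_sub hM hPε m m]

theorem RowStochastic.contraction_coeff_nonneg (hM : 2 ≤ M) (hP : RowStochastic P)
    (hPε : ∀ m m', ε ≤ P m m') : 0 ≤ (1 - 2 * ε) / (1 - ε) := by
  have := hP.two_mul_le_one hM hPε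
  exact div_nonneg (by linarith) (by linarith)

theorem IsBelief.sum_mul_rowStochastic (hb : IsBelief b) (hP : RowStochastic P) :
    IsBelief fun m' => ∑ m, b m * P m m' := by
  refine ⟨fun m' => sum_nonneg fun m _ => mul_nonneg (hb.1 m) (hP.1 m m'), ?_⟩
  rw [sum_comm]
  simp only [← mul_sum, hP.2, mul_one, hb.2]

theorem Hupd_eq_sum_bayes (b : Fin M → ℝ) (i : Fin I) (r : Bool) :
    Hupd P μ b i r = fun m' => ∑ m, bayes b (fun m => bern (μ m i) r) m * P m m' := by
  ext m'
  simp only [Hupd, bayes, sum_div]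
  exact sum_congr rfl fun m _ => by ring

theorem pObs_pos (hμ : ∀ m i, μ m i ∈ Set.Ioo 0 1) (hb : IsBelief b) (i : Fin I) (r : Bool) :
    0 < pObs μ b i r :=
  hb.sum_mul_pos fun m => bern_pos (hμ m i) r

theorem IsBelief.Hupd (hP : RowStochastic P) (hμ : ∀ m i, μ m i ∈ Set.Ioo 0 1)
    (hb : IsBelief b) (i : Fin I) (r : Bool) : IsBelief (Hupd P μ b i r) := by
  rw [Hupd_eq_sum_bayes]
  exact (hb.bayes fun m => bern_pos (hμ m i) r).sum_mul_rowStochastic hP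

theorem le_Hupd (hμ : ∀ m i, μ m i ∈ Set.Ioo 0 1) (hPε : ∀ m m', ε ≤ P m m')
    (hb : IsBelief b) (i : Fin I) (r : Bool) (m' : Fin M) : ε ≤ Hupd P μ b i r m' := by
  have hb' := hb.bayes fun m => bern_pos (hμ m i) r
  rw [Hupd_eq_sum_bayes]
  calc ε = ∑ m, bayes b (fun m => bern (μ m i) r) m * ε := by rw [← sum_mul, hb'.2, one_mul]
    _ ≤ _ := sum_le_sum fun m _ => mul_le_mul_of_nonneg_left (hPε m m') (hb'.1 m)

/-- `P m m' * g m' / ∑ m'', P m m'' * g m''` is the law of the next hidden state given the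
current one `m` and future rewards whose likelihood from each state is `g`. -/
theorem smoothing_kernel_minorization (hM : 2 ≤ M) (hP : RowStochastic P)
    (hPε : ∀ m m', ε ≤ P m m') (hε : 0 < ε) {g : Fin M → ℝ} (hg : ∀ m, 0 < g m)
    (m m' : Fin M) :
    ε / (1 - ε) * (g m' / ∑ m'', g m'') ≤ P m m' * g m' / ∑ m'', P m m'' * g m'' := by
  have hε1 : 0 < 1 - ε := by linarith [hP.two_mul_le_one hM hPε]
  have hG : 0 < ∑ m'', g m'' := sum_pos (fun m'' _ => hg m'') ⟨m, mem_univ m⟩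
  have hA : 0 < ∑ m'', P m m'' * g m'' :=
    sum_pos (fun m'' _ => mul_pos (hε.trans_le (hPε m m'')) (hg m'')) ⟨m, mem_univ m⟩
  have hAG : ∑ m'', P m m'' * g m'' ≤ (1 - ε) * ∑ m'', g m'' := by
    rw [mul_sum]
    exact sum_le_sum fun m'' _ =>
      mul_le_mul_of_nonneg_right (hP.le_one_sub hM hPε m m'') (hg m'').le
  rw [div_mul_div_comm, div_le_div_iff₀ (mul_pos hε1 hG) hA]
  calc ε * g m' * ∑ m'', P m m'' * g m'' ≤ ε * g m' * ((1 - ε) * ∑ m'', g m'') :=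
        mul_le_mul_of_nonneg_left hAG (mul_pos hε (hg m')).le
    _ ≤ P m m' * g m' * ((1 - ε) * ∑ m'', g m'') :=
        mul_le_mul_of_nonneg_right (mul_le_mul_of_nonneg_right (hPε m m') (hg m').le)
          (mul_pos hε1 hG).le

/-- Given the future rewards, the posterior of the next state is the posterior of the current
state pushed through the smoothing kernel, so Dobrushin's estimate applies. -/
theorem l1_bayes_Hupd_le (hM : 2 ≤ M) (hP : RowStochastic P) (hPε : ∀ m m', ε ≤ P m m')
    (hε : 0 < ε) (hμ : ∀ m i, μ m i ∈ Set.Ioo 0 1) {α : ℝ} (hα : α = (1 - 2 * ε) / (1 - ε))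
    (hb₁ : IsBelief b₁) (hb₂ : IsBelief b₂) (i : Fin I) (r : Bool) {g : Fin M → ℝ}
    (hg : ∀ m, 0 < g m) :
    l1 (bayes (Hupd P μ b₁ i r) g) (bayes (Hupd P μ b₂ i r) g) ≤
      α * l1 (bayes b₁ fun m => bern (μ m i) r * ∑ m', P m m' * g m')
        (bayes b₂ fun m => bern (μ m i) r * ∑ m', P m m' * g m') := by
  have hw : ∀ m, 0 < bern (μ m i) r := fun m => bern_pos (hμ m i) r
  have hA : ∀ m, 0 < ∑ m', P m m' * g m' := fun m =>
    sum_pos (fun m' _ => mul_pos (hε.trans_le (hPε m m')) (hg m')) ⟨m, mem_univ m⟩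
  have hwA : ∀ m, 0 < bern (μ m i) r * ∑ m', P m m' * g m' := fun m => mul_pos (hw m) (hA m)
  have hsmooth : ∀ b, IsBelief b → ∀ m', bayes (Hupd P μ b i r) g m' =
      ∑ m, bayes b (fun m => bern (μ m i) r * ∑ m', P m m' * g m') m *
        (P m m' * g m' / ∑ m'', P m m'' * g m'') := fun b hb m' => by
    rw [Hupd_eq_sum_bayes, bayes_sum_mul _ fun m => (hA m).ne', bayes_bayes hb hw]
  have hG : 0 < ∑ m, g m := sum_pos (fun m _ => hg m) ⟨⟨0, by omega⟩, mem_univ _⟩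
  calc l1 (bayes (Hupd P μ b₁ i r) g) (bayes (Hupd P μ b₂ i r) g)
      ≤ (1 - ε / (1 - ε)) * l1 (bayes b₁ fun m => bern (μ m i) r * ∑ m', P m m' * g m')
        (bayes b₂ fun m => bern (μ m i) r * ∑ m', P m m' * g m') := by
        simp only [l1, hsmooth b₁ hb₁, hsmooth b₂ hb₂, ← sum_sub_distrib, ← sub_mul]
        refine sum_abs_sum_mul_le_of_minorization ?_
          (smoothing_kernel_minorization hM hP hPε hε hg) (fun m => ?_)
          ((hb₁.bayes hwA).sum_sub_eq_zero (hb₂.bayes hwA))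
        · rw [← sum_div, div_self hG.ne']
        · rw [← sum_div, div_self (hA m).ne']
    _ = α * _ := by
        have hε1 : 1 - ε ≠ 0 := by linarith [hP.two_mul_le_one hM hPε]
        rw [hα]
        field_simp
        ring

end BeliefUpdate

/-- A policy maps the rewards observed so far (oldest first) to the next arm; `shiftPolicy σ r`
is what remains of `σ` once the first reward `r` has been observed. -/
def shiftPolicy (σ : List Bool → Fin I) (r : Bool) : List Bool → Fin I :=
  fun l => σ (r :: l)

/-- `filterPath`, `pathLik` and `pathProb` are `Hiter`, `law` and `Qlaw` with the arms chosen
by a policy (and with `pathLik P μ 0 = 1`). -/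
noncomputable def filterPath (P : Fin M → Fin M → ℝ) (μ : Fin M → Fin I → ℝ) :
    (n : ℕ) → (List Bool → Fin I) → (Fin M → ℝ) → (Fin n → Bool) → Fin M → ℝ
  | 0, _, b, _ => b
  | n + 1, σ, b, rs =>
      filterPath P μ n (shiftPolicy σ (rs 0)) (Hupd P μ b (σ []) (rs 0)) (Fin.tail rs)

noncomputable def pathLik (P : Fin M → Fin M → ℝ) (μ : Fin M → Fin I → ℝ) :
    (n : ℕ) → (List Bool → Fin I) → Fin M → (Fin n → Bool) → ℝ
  | 0, _, _, _ => 1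
  | n + 1, σ, m, rs => bern (μ m (σ [])) (rs 0) *
      ∑ m', P m m' * pathLik P μ n (shiftPolicy σ (rs 0)) m' (Fin.tail rs)

noncomputable def pathProb (P : Fin M → Fin M → ℝ) (μ : Fin M → Fin I → ℝ) (n : ℕ)
    (σ : List Bool → Fin I) (b : Fin M → ℝ) (rs : Fin n → Bool) : ℝ :=
  ∑ m, pathLik P μ n σ m rs * b m

section Paths

variable {P : Fin M → Fin M → ℝ} {μ : Fin M → Fin I → ℝ} {ε α : ℝ} {b b₁ b₂ : Fin M → ℝ}

theorem IsBelief.filterPath (hP : RowStochastic P) (hμ : ∀ m i, μ m i ∈ Set.Ioo 0 1) :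
    ∀ {n : ℕ} (σ : List Bool → Fin I) {b : Fin M → ℝ}, IsBelief b →
      ∀ rs, IsBelief (filterPath P μ n σ b rs)
  | 0, _, _, hb, _ => hb
  | _ + 1, _, _, hb, _ => IsBelief.filterPath hP hμ _ (hb.Hupd hP hμ _ _) _

theorem le_filterPath_succ (hP : RowStochastic P) (hPε : ∀ m m', ε ≤ P m m')
    (hμ : ∀ m i, μ m i ∈ Set.Ioo 0 1) :
    ∀ {n : ℕ} (σ : List Bool → Fin I) {b : Fin M → ℝ}, IsBelief b →
      ∀ rs m, ε ≤ filterPath P μ (n + 1) σ b rs m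
  | 0, _, _, hb, _, m => le_Hupd hμ hPε hb _ _ m
  | _ + 1, _, _, hb, _, m => le_filterPath_succ hP hPε hμ _ (hb.Hupd hP hμ _ _) _ m

theorem pathLik_pos (hPε : ∀ m m', ε ≤ P m m') (hε : 0 < ε) (hμ : ∀ m i, μ m i ∈ Set.Ioo 0 1) :
    ∀ (n : ℕ) (σ : List Bool → Fin I) (m : Fin M) (rs : Fin n → Bool),
      0 < pathLik P μ n σ m rs
  | 0, _, _, _ => one_pos
  | n + 1, _, m, _ => mul_pos (bern_pos (hμ _ _) _) <| sum_pos
      (fun m' _ => mul_pos (hε.trans_le (hPε m m')) (pathLik_pos hPε hε hμ n _ m' _))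
      ⟨m, mem_univ m⟩

theorem sum_pathLik (hP : RowStochastic P) :
    ∀ (n : ℕ) (σ : List Bool → Fin I) (m : Fin M), ∑ rs, pathLik P μ n σ m rs = 1
  | 0, _, _ => by simp [pathLik]
  | n + 1, σ, m => by
      rw [sum_fin_succ_pi]
      simp only [pathLik, Fin.cons_zero, Fin.tail_cons, ← mul_sum]
      rw [← sum_bern (μ m (σ []))]
      refine sum_congr rfl fun r _ => ?_
      rw [sum_comm]
      simp only [← mul_sum, sum_pathLik hP n, mul_one, hP.2]

theorem pathProb_nonneg (hPε : ∀ m m', ε ≤ P m m') (hε : 0 < ε)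
    (hμ : ∀ m i, μ m i ∈ Set.Ioo 0 1) (hb : IsBelief b) (n : ℕ) (σ : List Bool → Fin I)
    (rs : Fin n → Bool) : 0 ≤ pathProb P μ n σ b rs :=
  sum_nonneg fun m _ => mul_nonneg (pathLik_pos hPε hε hμ n σ m rs).le (hb.1 m)

theorem sum_pathProb (hP : RowStochastic P) (hb : IsBelief b) (n : ℕ)
    (σ : List Bool → Fin I) : ∑ rs, pathProb P μ n σ b rs = 1 := by
  simp only [pathProb]
  rw [sum_comm]
  simp only [← sum_mul, sum_pathLik hP, one_mul, hb.2]

theorem sum_abs_pathProb_sub_le (hP : RowStochastic P) (hPε : ∀ m m', ε ≤ P m m') (hε : 0 < ε)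
    (hμ : ∀ m i, μ m i ∈ Set.Ioo 0 1) (n : ℕ) (σ : List Bool → Fin I) :
    ∑ rs, |pathProb P μ n σ b₁ rs - pathProb P μ n σ b₂ rs| ≤ l1 b₁ b₂ :=
  calc ∑ rs, |pathProb P μ n σ b₁ rs - pathProb P μ n σ b₂ rs|
      ≤ ∑ rs, ∑ m, pathLik P μ n σ m rs * |b₁ m - b₂ m| := by
        refine sum_le_sum fun rs _ => ?_
        simp only [pathProb, ← sum_sub_distrib, ← mul_sub]
        refine (abs_sum_le_sum_abs _ _).trans (le_of_eq (sum_congr rfl fun m _ => ?_))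
        rw [abs_mul, abs_of_pos (pathLik_pos hPε hε hμ n σ m rs)]
    _ = l1 b₁ b₂ := by
        rw [sum_comm]
        simp only [← sum_mul, sum_pathLik hP, one_mul, l1]

theorem pathProb_cons (hμ : ∀ m i, μ m i ∈ Set.Ioo 0 1) (hb : IsBelief b) (n : ℕ)
    (σ : List Bool → Fin I) (r : Bool) (rs : Fin n → Bool) :
    pathProb P μ (n + 1) σ b (Fin.cons r rs) =
      pObs μ b (σ []) r * pathProb P μ n (shiftPolicy σ r) (Hupd P μ b (σ []) r) rs := by
  have hp := (pObs_pos hμ hb (σ []) r).ne'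
  simp only [pathProb, pathLik, Hupd_eq_sum_bayes, bayes, Fin.cons_zero, Fin.tail_cons,
    mul_sum, sum_mul]
  rw [sum_comm]
  refine sum_congr rfl fun m _ => sum_congr rfl fun m' _ => ?_
  rw [show ∑ m'', bern (μ m'' (σ [])) r * b m'' = pObs μ b (σ []) r from rfl]
  field_simp

theorem l1_filterPath_le (hM : 2 ≤ M) (hP : RowStochastic P) (hPε : ∀ m m', ε ≤ P m m')
    (hε : 0 < ε) (hμ : ∀ m i, μ m i ∈ Set.Ioo 0 1) (hα : α = (1 - 2 * ε) / (1 - ε)) :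
    ∀ (n : ℕ) (σ : List Bool → Fin I) (rs : Fin n → Bool) {b₁ b₂ : Fin M → ℝ},
      IsBelief b₁ → IsBelief b₂ →
      l1 (filterPath P μ n σ b₁ rs) (filterPath P μ n σ b₂ rs) ≤
        α ^ n * l1 (bayes b₁ (pathLik P μ n σ · rs)) (bayes b₂ (pathLik P μ n σ · rs))
  | 0, _, _, b₁, b₂, hb₁, hb₂ => by simp [filterPath, pathLik, bayes_one hb₁, bayes_one hb₂]
  | n + 1, σ, rs, b₁, b₂, hb₁, hb₂ => by
      calc l1 (filterPath P μ (n + 1) σ b₁ rs) (filterPath P μ (n + 1) σ b₂ rs)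
          ≤ α ^ n * l1 (bayes (Hupd P μ b₁ (σ []) (rs 0))
                (pathLik P μ n (shiftPolicy σ (rs 0)) · (Fin.tail rs)))
              (bayes (Hupd P μ b₂ (σ []) (rs 0))
                (pathLik P μ n (shiftPolicy σ (rs 0)) · (Fin.tail rs))) :=
            l1_filterPath_le hM hP hPε hε hμ hα n _ _ (hb₁.Hupd hP hμ _ _) (hb₂.Hupd hP hμ _ _)
        _ ≤ α ^ n * (α * l1 (bayes b₁ (pathLik P μ (n + 1) σ · rs))
              (bayes b₂ (pathLik P μ (n + 1) σ · rs))) :=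
            mul_le_mul_of_nonneg_left (l1_bayes_Hupd_le hM hP hPε hε hμ hα hb₁ hb₂ _ _
              (pathLik_pos hPε hε hμ n _ · _))
              (pow_nonneg (hα ▸ hP.contraction_coeff_nonneg hM hPε) n)
        _ = _ := by ring

theorem sum_pathProb_mul_l1_filterPath_le (hM : 2 ≤ M) (hP : RowStochastic P)
    (hPε : ∀ m m', ε ≤ P m m') (hε : 0 < ε) (hμ : ∀ m i, μ m i ∈ Set.Ioo 0 1)
    (hα : α = (1 - 2 * ε) / (1 - ε)) (n : ℕ) (σ : List Bool → Fin I)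
    (hb₁ : IsBelief b₁) (hb₂ : IsBelief b₂) :
    ∑ rs, pathProb P μ n σ b₁ rs * l1 (filterPath P μ n σ b₁ rs) (filterPath P μ n σ b₂ rs) ≤
      2 * α ^ n * l1 b₁ b₂ := by
  have hL := pathLik_pos (P := P) (μ := μ) hPε hε hμ n σ
  calc ∑ rs, pathProb P μ n σ b₁ rs * l1 (filterPath P μ n σ b₁ rs) (filterPath P μ n σ b₂ rs)
      ≤ ∑ rs, α ^ n * (2 * ∑ m, pathLik P μ n σ m rs * |b₁ m - b₂ m|) := by
        refine sum_le_sum fun rs _ => ?_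
        calc _ ≤ pathProb P μ n σ b₁ rs * (α ^ n *
                l1 (bayes b₁ (pathLik P μ n σ · rs)) (bayes b₂ (pathLik P μ n σ · rs))) :=
              mul_le_mul_of_nonneg_left (l1_filterPath_le hM hP hPε hε hμ hα n σ rs hb₁ hb₂)
                (pathProb_nonneg hPε hε hμ hb₁ n σ rs)
          _ = α ^ n * (pathProb P μ n σ b₁ rs *
                l1 (bayes b₁ (pathLik P μ n σ · rs)) (bayes b₂ (pathLik P μ n σ · rs))) := by
              ring
          _ ≤ _ := mul_le_mul_of_nonneg_left (mul_l1_bayes_le hb₁ hb₂ (hL · rs))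
              (pow_nonneg (hα ▸ hP.contraction_coeff_nonneg hM hPε) n)
    _ = 2 * α ^ n * l1 b₁ b₂ := by
        simp only [← mul_sum, mul_assoc]
        rw [sum_comm]
        simp only [← sum_mul, sum_pathLik hP, one_mul, l1]
        ring

end Paths

def LipschitzOnBeliefs (f : (Fin M → ℝ) → ℝ) (L : ℝ) : Prop :=
  ∀ ⦃b₁ b₂ : Fin M → ℝ⦄, IsBelief b₁ → IsBelief b₂ → |f b₁ - f b₂| ≤ L * l1 b₁ b₂

namespace LipschitzOnBeliefs

variable {f : (Fin M → ℝ) → ℝ} {L : ℝ}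

theorem of_sub_le (h : ∀ ⦃b₁ b₂ : Fin M → ℝ⦄, IsBelief b₁ → IsBelief b₂ →
    f b₁ - f b₂ ≤ L * l1 b₁ b₂) : LipschitzOnBeliefs f L :=
  fun b₁ b₂ hb₁ hb₂ => abs_sub_le_iff.2 ⟨h hb₁ hb₂, l1_comm b₁ b₂ ▸ h hb₂ hb₁⟩

theorem mono (hf : LipschitzOnBeliefs f L) {L' : ℝ} (hL : L ≤ L') : LipschitzOnBeliefs f L' :=
  fun b₁ b₂ hb₁ hb₂ => (hf hb₁ hb₂).trans (mul_le_mul_of_nonneg_right hL (l1_nonneg b₁ b₂))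

end LipschitzOnBeliefs

section Rewards

variable {μ : Fin M → Fin I → ℝ} {b : Fin M → ℝ}

theorem abs_sum_mul_sub_half_le (hμ : ∀ m i, μ m i ∈ Set.Ioo 0 1) (hb : IsBelief b) (i : Fin I) :
    |∑ m, μ m i * b m - 1 / 2| ≤ 1 / 2 := by
  have h0 : 0 ≤ ∑ m, μ m i * b m := sum_nonneg fun m _ => mul_nonneg (hμ m i).1.le (hb.1 m)
  have h1 : ∑ m, μ m i * b m ≤ 1 :=
    hb.2 ▸ sum_le_sum fun m _ => mul_le_of_le_one_left (hb.1 m) (hμ m i).2.le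
  exact abs_le.2 ⟨by linarith, by linarith⟩

theorem lipschitzOnBeliefs_sum_mul (hμ : ∀ m i, μ m i ∈ Set.Ioo 0 1) (i : Fin I) :
    LipschitzOnBeliefs (fun b => ∑ m, μ m i * b m) (1 / 2) := fun b₁ b₂ hb₁ hb₂ => by
  rw [← sum_sub_distrib]
  simp only [← mul_sub]
  refine abs_sum_mul_le_of_sum_eq_zero (c := 1 / 2) (hb₁.sum_sub_eq_zero hb₂)
    fun m => abs_le.2 ⟨?_, ?_⟩ <;> linarith [(hμ m i).1, (hμ m i).2]

end Rewards

noncomputable def policyValue (P : Fin M → Fin M → ℝ) (μ : Fin M → Fin I → ℝ) (β : ℝ) (j : ℕ) :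
    (n : ℕ) → (List Bool → Fin I) → (Fin M → ℝ) → ℝ
  | 0, _, b => Vfin P μ β j b
  | n + 1, σ, b => (∑ m, μ m (σ []) * b m) +
      β * ∑ r, pObs μ b (σ []) r * policyValue P μ β j n (shiftPolicy σ r) (Hupd P μ b (σ []) r)

noncomputable def policyReward (μ : Fin M → Fin I → ℝ) (σ : List Bool → Fin I) {n : ℕ}
    (rs : Fin n → Bool) (c : Fin M → ℝ) : ℝ :=
  ∑ m, μ m (σ (List.ofFn rs)) * c m

theorem policyReward_cons (μ : Fin M → Fin I → ℝ) (σ : List Bool → Fin I) (r : Bool) {n : ℕ}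
    (rs : Fin n → Bool) :
    policyReward μ σ (Fin.cons r rs) = policyReward μ (shiftPolicy σ r) rs := by
  ext c
  rw [policyReward, policyReward, List.ofFn_succ]
  rfl

noncomputable def pathMean (P : Fin M → Fin M → ℝ) (μ : Fin M → Fin I → ℝ) (n : ℕ)
    (σ : List Bool → Fin I) (b : Fin M → ℝ) (F : (Fin n → Bool) → (Fin M → ℝ) → ℝ) : ℝ :=
  ∑ rs, pathProb P μ n σ b rs * F rs (filterPath P μ n σ b rs)

section Values

variable {P : Fin M → Fin M → ℝ} {μ : Fin M → Fin I → ℝ} {ε α β : ℝ} {j : ℕ}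

theorem le_Vfin_succ (b : Fin M → ℝ) (i : Fin I) :
    (∑ m, μ m i * b m) + β * ∑ r, pObs μ b i r * Vfin P μ β j (Hupd P μ b i r) ≤
      Vfin P μ β (j + 1) b :=
  le_ciSup (f := fun i => (∑ m, μ m i * b m) +
    β * ∑ r, pObs μ b i r * Vfin P μ β j (Hupd P μ b i r)) (Set.finite_range _).bddAbove i

theorem exists_Vfin_succ_eq (hI : 0 < I) (b : Fin M → ℝ) :
    ∃ i, Vfin P μ β (j + 1) b =
      (∑ m, μ m i * b m) + β * ∑ r, pObs μ b i r * Vfin P μ β j (Hupd P μ b i r) := by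
  have : Nonempty (Fin I) := ⟨⟨0, hI⟩⟩
  obtain ⟨i, hi⟩ := exists_eq_ciSup_of_finite (f := fun i => (∑ m, μ m i * b m) +
    β * ∑ r, pObs μ b i r * Vfin P μ β j (Hupd P μ b i r))
  exact ⟨i, hi.symm⟩

theorem policyValue_le_Vfin (hP : RowStochastic P) (hμ : ∀ m i, μ m i ∈ Set.Ioo 0 1)
    (hβ : 0 ≤ β) : ∀ (n : ℕ) (σ : List Bool → Fin I) {b : Fin M → ℝ}, IsBelief b →
      policyValue P μ β j n σ b ≤ Vfin P μ β (j + n) b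
  | 0, _, _, _ => le_rfl
  | n + 1, σ, b, hb => le_trans (add_le_add le_rfl (mul_le_mul_of_nonneg_left
      (sum_le_sum fun r _ => mul_le_mul_of_nonneg_left
        (policyValue_le_Vfin hP hμ hβ n _ (hb.Hupd hP hμ _ r)) (pObs_pos hμ hb _ r).le) hβ))
      (le_Vfin_succ b (σ []))

theorem exists_policyValue_eq_Vfin (hP : RowStochastic P) (hμ : ∀ m i, μ m i ∈ Set.Ioo 0 1)
    (hI : 0 < I) : ∀ (n : ℕ) {b : Fin M → ℝ}, IsBelief b →
      ∃ σ, policyValue P μ β j n σ b = Vfin P μ β (j + n) b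
  | 0, _, _ => ⟨fun _ => ⟨0, hI⟩, rfl⟩
  | n + 1, b, hb => by
      obtain ⟨i, hi⟩ := exists_Vfin_succ_eq (j := j + n) hI b
      choose σ hσ using fun r => exists_policyValue_eq_Vfin hP hμ hI n (hb.Hupd hP hμ i r)
      refine ⟨fun | [] => i | r :: l => σ r l, ?_⟩
      rw [← add_assoc, hi]
      exact congrArg (_ + β * ·) (sum_congr rfl fun r _ => by rw [← hσ r]; rfl)

theorem pathMean_succ (hμ : ∀ m i, μ m i ∈ Set.Ioo 0 1) {b : Fin M → ℝ} (hb : IsBelief b)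
    (n : ℕ) (σ : List Bool → Fin I) (F : (Fin (n + 1) → Bool) → (Fin M → ℝ) → ℝ) :
    pathMean P μ (n + 1) σ b F = ∑ r, pObs μ b (σ []) r *
      pathMean P μ n (shiftPolicy σ r) (Hupd P μ b (σ []) r) (fun rs => F (Fin.cons r rs)) := by
  rw [pathMean, sum_fin_succ_pi]
  refine sum_congr rfl fun r _ => ?_
  rw [pathMean, mul_sum]
  exact sum_congr rfl fun rs _ => by rw [pathProb_cons hμ hb, mul_assoc]; rfl

theorem policyValue_eq_sum (hP : RowStochastic P) (hμ : ∀ m i, μ m i ∈ Set.Ioo 0 1) :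
    ∀ (n : ℕ) (σ : List Bool → Fin I) {b : Fin M → ℝ}, IsBelief b →
      policyValue P μ β j n σ b =
        ∑ t ∈ range n, β ^ t * pathMean P μ t σ b (policyReward μ σ) +
          β ^ n * pathMean P μ n σ b (fun _ => Vfin P μ β j)
  | 0, _, b, hb => by simp [policyValue, pathMean, pathProb, pathLik, filterPath, hb.2]
  | n + 1, σ, b, hb => by
      have hreward : ∀ t, pathMean P μ (t + 1) σ b (policyReward μ σ) =
          ∑ r, pObs μ b (σ []) r * pathMean P μ t (shiftPolicy σ r) (Hupd P μ b (σ []) r)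
            (policyReward μ (shiftPolicy σ r)) :=
        fun t => by simp only [pathMean_succ hμ hb, policyReward_cons]
      have hreward₀ : pathMean P μ 0 σ b (policyReward μ σ) = ∑ m, μ m (σ []) * b m := by
        simp [pathMean, pathProb, pathLik, filterPath, policyReward, hb.2]
      rw [policyValue, sum_range_succ', hreward₀, pathMean_succ hμ hb]
      simp only [hreward, policyValue_eq_sum hP hμ n _ (hb.Hupd hP hμ _ _), mul_add, mul_sum,
        sum_add_distrib]
      rw [sum_comm (s := range n)]
      simp only [pow_zero, one_mul, pow_succ]
      ring_nf

theorem pathMean_sub_le (hM : 2 ≤ M) (hP : RowStochastic P) (hPε : ∀ m m', ε ≤ P m m')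
    (hε : 0 < ε) (hμ : ∀ m i, μ m i ∈ Set.Ioo 0 1) (hα : α = (1 - 2 * ε) / (1 - ε)) (n : ℕ)
    (σ : List Bool → Fin I) {b₁ b₂ : Fin M → ℝ} (hb₁ : IsBelief b₁) (hb₂ : IsBelief b₂)
    {F : (Fin n → Bool) → (Fin M → ℝ) → ℝ} {Λ c ω : ℝ} (hΛ : 0 ≤ Λ)
    (hF : ∀ rs, LipschitzOnBeliefs (F rs) Λ)
    (hc : ∀ rs, |F rs (filterPath P μ n σ b₂ rs) - c| ≤ ω) :
    pathMean P μ n σ b₁ F - pathMean P μ n σ b₂ F ≤ (2 * Λ * α ^ n + ω) * l1 b₁ b₂ := by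
  set Q₁ := pathProb P μ n σ b₁
  set Q₂ := pathProb P μ n σ b₂
  set H₁ := filterPath P μ n σ b₁
  set H₂ := filterPath P μ n σ b₂
  have hdrift : ∑ rs, Q₁ rs * (F rs (H₁ rs) - F rs (H₂ rs)) ≤ 2 * Λ * α ^ n * l1 b₁ b₂ :=
    calc ∑ rs, Q₁ rs * (F rs (H₁ rs) - F rs (H₂ rs)) ≤ ∑ rs, Λ * (Q₁ rs * l1 (H₁ rs) (H₂ rs)) :=
          sum_le_sum fun rs _ => by
            rw [mul_left_comm]
            exact mul_le_mul_of_nonneg_left ((le_abs_self _).trans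
              (hF rs (hb₁.filterPath hP hμ σ rs) (hb₂.filterPath hP hμ σ rs)))
              (pathProb_nonneg hPε hε hμ hb₁ n σ rs)
      _ ≤ Λ * (2 * α ^ n * l1 b₁ b₂) := by
          rw [← mul_sum]
          exact mul_le_mul_of_nonneg_left
            (sum_pathProb_mul_l1_filterPath_le hM hP hPε hε hμ hα n σ hb₁ hb₂) hΛ
      _ = 2 * Λ * α ^ n * l1 b₁ b₂ := by ring
  have hlaw : ∑ rs, F rs (H₂ rs) * (Q₁ rs - Q₂ rs) ≤ ω * l1 b₁ b₂ := by
    have hω : 0 ≤ ω := (abs_nonneg _).trans (hc fun _ => true)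
    have hQ : ∑ rs, (Q₁ rs - Q₂ rs) = 0 := by
      rw [sum_sub_distrib, sum_pathProb hP hb₁, sum_pathProb hP hb₂, sub_self]
    exact (le_abs_self _).trans ((abs_sum_mul_le_of_sum_eq_zero hQ hc).trans
      (mul_le_mul_of_nonneg_left (sum_abs_pathProb_sub_le hP hPε hε hμ n σ) hω))
  have hsplit : pathMean P μ n σ b₁ F - pathMean P μ n σ b₂ F =
      ∑ rs, Q₁ rs * (F rs (H₁ rs) - F rs (H₂ rs)) + ∑ rs, F rs (H₂ rs) * (Q₁ rs - Q₂ rs) := by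
    simp only [pathMean, ← sum_add_distrib, ← sum_sub_distrib]
    exact sum_congr rfl fun rs _ => by ring
  rw [hsplit, add_mul]
  exact add_le_add hdrift hlaw

theorem LipschitzOnBeliefs.Vfin_add (hM : 2 ≤ M) (hI : 0 < I) (hP : RowStochastic P)
    (hPε : ∀ m m', ε ≤ P m m') (hε : 0 < ε) (hμ : ∀ m i, μ m i ∈ Set.Ioo 0 1)
    (hα : α = (1 - 2 * ε) / (1 - ε)) (hβ : 0 ≤ β) {n : ℕ} (hn : n ≠ 0) {Λ : ℝ} (hΛ : 0 ≤ Λ)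
    (hV : LipschitzOnBeliefs (Vfin P μ β j) Λ) :
    LipschitzOnBeliefs (Vfin P μ β (j + n))
      (∑ t ∈ range n, β ^ t * (α ^ t + 1 / 2) + β ^ n * (Λ * (2 * α ^ n + (1 - M * ε)))) := by
  refine .of_sub_le fun b₁ b₂ hb₁ hb₂ => ?_
  obtain ⟨σ, hσ⟩ := exists_policyValue_eq_Vfin (β := β) (j := j) hP hμ hI n hb₁
  have hreward : ∀ t, pathMean P μ t σ b₁ (policyReward μ σ) -
      pathMean P μ t σ b₂ (policyReward μ σ) ≤
      (α ^ t + 1 / 2) * l1 b₁ b₂ := fun t => by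
    refine (pathMean_sub_le hM hP hPε hε hμ hα t σ hb₁ hb₂ (by norm_num)
      
      (fun _ => lipschitzOnBeliefs_sum_mul hμ _)
      (fun rs => abs_sum_mul_sub_half_le hμ (hb₂.filterPath hP hμ σ rs) _)).trans_eq ?_
    ring
  have hterminal : pathMean P μ n σ b₁ (fun _ => Vfin P μ β j) -
      pathMean P μ n σ b₂ (fun _ => Vfin P μ β j) ≤
      Λ * (2 * α ^ n + (1 - M * ε)) * l1 b₁ b₂ := by
    obtain ⟨n, rfl⟩ : ∃ n', n = n' + 1 := ⟨n - 1, by omega⟩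
    have hH := fun rs => hb₂.filterPath hP hμ (n := n + 1) σ rs
    obtain ⟨c, hc⟩ := exists_abs_sub_le_half (D := Λ * (2 * (1 - M * ε)))
      (v := fun rs => Vfin P μ β j (filterPath P μ (n + 1) σ b₂ rs)) fun x y =>
        (le_abs_self _).trans ((hV (hH x) (hH y)).trans (mul_le_mul_of_nonneg_left
          (l1_le_of_forall_le (hH x) (hH y) (le_filterPath_succ hP hPε hμ σ hb₂ x)
            (le_filterPath_succ hP hPε hμ σ hb₂ y)) hΛ))
    refine (pathMean_sub_le hM hP hPε hε hμ hα (n + 1) σ hb₁ hb₂ hΛ (fun _ => hV) hc).trans_eq ?_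
    ring
  calc Vfin P μ β (j + n) b₁ - Vfin P μ β (j + n) b₂
      ≤ policyValue P μ β j n σ b₁ - policyValue P μ β j n σ b₂ := by
        linarith [policyValue_le_Vfin (j := j) hP hμ hβ n σ hb₂]
    _ = ∑ t ∈ range n, β ^ t *
          (pathMean P μ t σ b₁ (policyReward μ σ) -
            pathMean P μ t σ b₂ (policyReward μ σ)) +
        β ^ n * (pathMean P μ n σ b₁ (fun _ => Vfin P μ β j) -
          pathMean P μ n σ b₂ (fun _ => Vfin P μ β j)) := by
        rw [policyValue_eq_sum hP hμ n σ hb₁, policyValue_eq_sum hP hμ n σ hb₂]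
        simp only [mul_sub, sum_sub_distrib]
        ring
    _ ≤ ∑ t ∈ range n, β ^ t * ((α ^ t + 1 / 2) * l1 b₁ b₂) +
        β ^ n * (Λ * (2 * α ^ n + (1 - M * ε)) * l1 b₁ b₂) :=
        add_le_add (sum_le_sum fun t _ => mul_le_mul_of_nonneg_left (hreward t) (pow_nonneg hβ t))
          (mul_le_mul_of_nonneg_left hterminal (pow_nonneg hβ n))
    _ = _ := by
        rw [add_mul, sum_mul]
        simp only [mul_assoc]

end Values

theorem lipschitzOnBeliefs_mul_of_step {f : ℕ → (Fin M → ℝ) → ℝ} {n : ℕ} {η q : ℝ}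
    (hη : 0 ≤ η) (hq : 0 ≤ q) (hq1 : q < 1) (h₀ : LipschitzOnBeliefs (f 0) 1)
    (hstep : ∀ j Λ, 0 ≤ Λ → LipschitzOnBeliefs (f j) Λ →
      LipschitzOnBeliefs (f (j + n)) (η + q * Λ)) :
    ∀ k : ℕ, LipschitzOnBeliefs (f (k * n)) (η * (1 - q ^ k) / (1 - q) + q ^ k)
  | 0 => by simpa using h₀
  | k + 1 => by
      have hΛ : 0 ≤ η * (1 - q ^ k) / (1 - q) + q ^ k :=
        add_nonneg (div_nonneg (mul_nonneg hη (sub_nonneg.2 (pow_le_one₀ hq hq1.le)))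
          (sub_nonneg.2 hq1.le)) (pow_nonneg hq k)
      rw [Nat.succ_mul]
      refine (hstep _ _ hΛ (lipschitzOnBeliefs_mul_of_step hη hq hq1 h₀ hstep k)).mono
        (le_of_eq ?_)
      field_simp [(sub_pos.2 hq1).ne']
      ring

theorem pow_natCeil_log_div_log_le {α y : ℝ} (hα : α ∈ Set.Ioo 0 1) (hy : 0 < y) :
    α ^ ⌈Real.log y / Real.log α⌉₊ ≤ y := by
  rw [← Real.log_le_log_iff (pow_pos hα.1 _) hy, Real.log_pow,
    ← div_le_iff_of_neg (Real.log_neg hα.1 hα.2)]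
  exact Nat.le_ceil _

theorem eta_nonneg {n₀ : ℕ} {α η C₄ C₅ : ℝ} (hα : α ∈ Set.Ioo 0 1) (hC₄ : C₄ = 2 / (1 - α))
    (hC₅ : C₅ = (1 + α) / 2) (hη : η = C₄ / (1 - α) + C₅ * n₀) : 0 ≤ η := by
  have h1α : 0 ≤ 1 - α := by linarith [hα.2]
  rw [hη, hC₄, hC₅]
  exact add_nonneg (div_nonneg (div_nonneg zero_le_two h1α) h1α)
    (mul_nonneg (by linarith [hα.1]) n₀.cast_nonneg)

theorem block_coeff_le {n₀ : ℕ} {α β γ η C₄ C₅ δ Λ : ℝ} (hα : α ∈ Set.Ioo 0 1) (hδ : δ ≤ α)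
    (hC₄ : C₄ = 2 / (1 - α)) (hC₅ : C₅ = (1 + α) / 2) (hγ : γ = (3 + α) / 4)
    (hη : η = C₄ / (1 - α) + C₅ * n₀) (hpow : α ^ n₀ ≤ (1 - α) ^ 2 / 8)
    (hβ : β ∈ Set.Icc 0 1) (hΛ : 0 ≤ Λ) :
    ∑ t ∈ range n₀, β ^ t * (α ^ t + 1 / 2) + β ^ n₀ * (Λ * (2 * α ^ n₀ + δ)) ≤
      η + β ^ n₀ * γ * Λ := by
  obtain ⟨hα0, hα1⟩ := hα
  have h1α : 0 < 1 - α := sub_pos.2 hα1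
  have hreward : ∑ t ∈ range n₀, β ^ t * (α ^ t + 1 / 2) ≤ η :=
    calc ∑ t ∈ range n₀, β ^ t * (α ^ t + 1 / 2) ≤ ∑ t ∈ range n₀, (α ^ t + 1 / 2) :=
          sum_le_sum fun t _ => mul_le_of_le_one_left (by positivity) (pow_le_one₀ hβ.1 hβ.2)
      _ = ∑ t ∈ range n₀, α ^ t + n₀ / 2 := by
          rw [sum_add_distrib, sum_const, card_range, nsmul_eq_mul]
          ring
      _ ≤ 1 / (1 - α) + n₀ / 2 := by
          have := geom_sum_Ico_le_of_lt_one (m := 0) (n := n₀) hα0.le hα1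
          rw [← range_eq_Ico, pow_zero] at this
          linarith
      _ ≤ η := by
          have hgeom : 1 / (1 - α) ≤ 2 / (1 - α) / (1 - α) := by
            rw [div_div, div_le_div_iff₀ h1α (by positivity)]
            nlinarith
          have hlinear : (n₀ : ℝ) / 2 ≤ (1 + α) / 2 * n₀ := by
            nlinarith [(Nat.cast_nonneg n₀ : (0 : ℝ) ≤ n₀)]
          rw [hη, hC₄, hC₅]
          linarith
  have hterminal : 2 * α ^ n₀ + δ ≤ γ := by
    rw [hγ]
    nlinarith
  calc ∑ t ∈ range n₀, β ^ t * (α ^ t + 1 / 2) + β ^ n₀ * (Λ * (2 * α ^ n₀ + δ))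
      ≤ η + β ^ n₀ * (Λ * γ) :=
        add_le_add hreward (mul_le_mul_of_nonneg_left (mul_le_mul_of_nonneg_left hterminal hΛ)
          (pow_nonneg hβ.1 n₀))
    _ = η + β ^ n₀ * γ * Λ := by ring

theorem discounted_value_lipschitz_general {M I : ℕ} (hM : 2 ≤ M) (hI : 0 < I)
    (P : Fin M → Fin M → ℝ) (hP : RowStochastic P)
    (μ : Fin M → Fin I → ℝ) (hμ : ∀ m i, μ m i ∈ Set.Ioo (0 : ℝ) 1)
    (ε : ℝ) (hε : IsLeast (Set.range fun q : Fin M × Fin M => P q.1 q.2) ε)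
    (hε0 : 0 < ε) (hεhalf : ε < 1 / 2)
    (α C₄ C₅ γ η : ℝ) (n₀ : ℕ)
    (hα : α = (1 - 2 * ε) / (1 - ε))
    (hC₄ : C₄ = 2 / (1 - α)) (hC₅ : C₅ = (1 + α) / 2)
    (hn₀ : n₀ = ⌈Real.log ((1 - C₅) / (2 * C₄)) / Real.log α⌉₊)
    (hγ : γ = (3 + α) / 4)
    (hη : η = C₄ / (1 - α) + C₅ * n₀)
    (β : ℝ) (hβ : β ∈ Set.Ioo (0 : ℝ) 1)
    (k : ℕ)
    (b₁ b₂ : Fin M → ℝ) (hb₁ : IsBelief b₁) (hb₂ : IsBelief b₂) :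
    |Vfin P μ β (k * n₀) b₁ - Vfin P μ β (k * n₀) b₂| ≤
      (η * (1 - (β ^ n₀ * γ) ^ k) / (1 - β ^ n₀ * γ) + (β ^ n₀ * γ) ^ k) *
        l1 b₁ b₂ := by
  have hPε : ∀ m m', ε ≤ P m m' := fun m m' => hε.2 ⟨(m, m'), rfl⟩
  have hα01 : α ∈ Set.Ioo 0 1 :=
    hα ▸ ⟨div_pos (by linarith) (by linarith), (div_lt_one (by linarith)).2 (by linarith)⟩
  have hpow : α ^ n₀ ≤ (1 - α) ^ 2 / 8 := by
    rw [hn₀, show (1 - C₅) / (2 * C₄) = (1 - α) ^ 2 / 8 by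
      rw [hC₅, hC₄]; field_simp [(sub_pos.2 hα01.2).ne']; ring]
    exact pow_natCeil_log_div_log_le hα01 (by nlinarith [hα01.2])
  have hn₀0 : n₀ ≠ 0 := by
    rintro rfl
    rw [pow_zero] at hpow
    nlinarith [hα01.1, hα01.2]
  have hMε : 1 - M * ε ≤ α :=
    calc 1 - M * ε ≤ 1 - 2 * ε := by nlinarith [show (2 : ℝ) ≤ M by exact_mod_cast hM]
      _ ≤ α := hα ▸ le_div_self (by linarith) (by linarith) (by linarith)
  have hq : β ^ n₀ * γ ∈ Set.Ico 0 1 := by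
    rw [hγ]
    exact ⟨mul_nonneg (pow_nonneg hβ.1.le n₀) (by linarith [hα01.1]), (mul_le_of_le_one_left (by linarith [hα01.1])
      (pow_le_one₀ hβ.1.le hβ.2.le)).trans_lt (by linarith [hα01.2])⟩
  refine lipschitzOnBeliefs_mul_of_step (eta_nonneg hα01 hC₄ hC₅ hη) hq.1 hq.2
    (fun b₁ b₂ _ _ => ?_) (fun j Λ hΛ hV => ?_) k hb₁ hb₂
  · simpa [Vfin] using l1_nonneg b₁ b₂
  · exact (hV.Vfin_add hM hI hP hPε hε0 hμ hα hβ.1.le hn₀0 hΛ).mono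
      (block_coeff_le hα01 hMε hC₄ hC₅ hγ hη hpow (Set.Ioo_subset_Icc_self hβ) hΛ)

/-- Lipschitz bound for the finite-horizon discounted value
functions at horizons that are multiples of `n₀`. -/
theorem discounted_value_lipschitz {M I : ℕ} (hM : 2 ≤ M) (hI : 0 < I)
    (P : Fin M → Fin M → ℝ) (hP : RowStochastic P)
    (μ : Fin M → Fin I → ℝ) (hμ : ∀ m i, μ m i ∈ Set.Ioo (0 : ℝ) 1)
    (ε : ℝ) (hε : IsLeast (Set.range fun q : Fin M × Fin M => P q.1 q.2) ε)
    (hε0 : 0 < ε) (hεhalf : ε < 1 / 2)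
    (α C₄ C₅ γ η : ℝ) (n₀ : ℕ)
    (hα : α = (1 - 2 * ε) / (1 - ε))
    (hC₄ : C₄ = 2 / (1 - α)) (hC₅ : C₅ = (1 + α) / 2)
    (hn₀ : n₀ = ⌈Real.log ((1 - C₅) / (2 * C₄)) / Real.log α⌉₊)
    (hγ : γ = (3 + α) / 4)
    (hη : η = C₄ / (1 - α) + C₅ * n₀)
    (β : ℝ) (hβ : β ∈ Set.Ioo (0 : ℝ) 1)
    (k : ℕ) (hk : 1 ≤ k)
    (b₁ b₂ : Fin M → ℝ) (hb₁ : IsBelief b₁) (hb₂ : IsBelief b₂) :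
    |Vfin P μ β (k * n₀) b₁ - Vfin P μ β (k * n₀) b₂| ≤
      (η * (1 - (β ^ n₀ * γ) ^ k) / (1 - β ^ n₀ * γ) + (β ^ n₀ * γ) ^ k) *
        l1 b₁ b₂ :=
  discounted_value_lipschitz_general hM hI P hP μ hμ ε hε hε0 hεhalf α C₄ C₅ γ η n₀ hα hC₄ hC₅ hn₀
    hγ hη β hβ k b₁ b₂ hb₁ hb₂
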